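/- arXiv:1202.0866 — 8 statements merged into one kernel-verified Lean document; each statement's English description precedes it below -/
import Mathlib

section
/- Let s ≥ 1 and 1 ≤ k ≤ m. Let γ ∈ F_{q^m} be such that γ, γ^q, γ^{q^2}, ..., γ^{q^{m−1}} are pairwise distinct (i.e., γ lies in no proper subfield of F_{q^m}). Let Q_0, Q_1, ..., Q_s be linearized polynomials over F_{q^m}, not all zero. Then the number of linearized polynomials f over F_{q^m} of q-degree at most k−1 satisfying Q_0(X) + ∑_{i=1}^{s} Q_i(f(γ^{i−1}X)) = 0 (as a polynomial identity) is at most q^{m(s−1)}; equivalently, the affine F_q-space of solutions has F_q-dimension at most m(s−1). -/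
open Polynomial

/-- The linearized polynomial `∑ i, a i * X^(q^i)` with coefficient vector `a`. -/
noncomputable def linPoly (q : ℕ) {F : Type*} [Field F] {D : ℕ} (a : Fin D → F) : Polynomial F :=
  ∑ i : Fin D, Polynomial.C (a i) * Polynomial.X ^ (q ^ (i : ℕ))

/-- A polynomial is linearized (w.r.t. `q`) if its support consists of powers `q^i`. -/
def IsLinearized (q : ℕ) {F : Type*} [Field F] (f : Polynomial F) : Prop :=
  ∀ n, f.coeff n ≠ 0 → ∃ i, n = q ^ i

section Aux

variable {F : Type*} [Field F]

lemma linPoly_comp_CX {q k : ℕ} (a : Fin k → F) (c : F) :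
    (linPoly q a).comp (C c * X) = ∑ i : Fin k, C (a i * c ^ q ^ (i : ℕ)) * X ^ q ^ (i : ℕ) := by
  unfold linPoly
  rw [Polynomial.sum_comp]
  refine Finset.sum_congr rfl fun i _ => ?_
  rw [Polynomial.mul_comp, Polynomial.C_comp, Polynomial.X_pow_comp, mul_pow, ← Polynomial.C_pow,
    Polynomial.C_mul, mul_assoc]

lemma coeff_comp_key {p t q : ℕ} (hp : p.Prime) [CharP F p] (hq : q = p ^ t) (hq2 : 2 ≤ q)
    {k : ℕ} (Q : Polynomial F) (hQ : IsLinearized q Q) (c : Fin k → F) (n0 : ℕ) :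
    (Q.comp (∑ i : Fin k, C (c i) * X ^ q ^ (i : ℕ))).coeff (q ^ n0)
      = ∑ i : Fin k, if (i : ℕ) ≤ n0 then
          Q.coeff (q ^ (n0 - (i : ℕ))) * c i ^ q ^ (n0 - (i : ℕ)) else 0 := by
  classical
  haveI : Fact p.Prime := ⟨hp⟩
  haveI : CharP (Polynomial F) p := charP_of_injective_ringHom Polynomial.C_injective p
  have hinj : ∀ a b : ℕ, q ^ a = q ^ b → a = b := fun a b h => Nat.pow_right_injective hq2 h
  set g : Polynomial F := ∑ i : Fin k, C (c i) * X ^ q ^ (i : ℕ) with hgdef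
  have hgpow : ∀ j : ℕ, g ^ q ^ j = ∑ i : Fin k, C (c i ^ q ^ j) * X ^ q ^ ((i : ℕ) + j) := by
    intro j
    have h1 : q ^ j = p ^ (t * j) := by rw [hq, ← pow_mul]
    rw [hgdef, h1, sum_pow_char_pow]
    refine Finset.sum_congr rfl fun i _ => ?_
    rw [mul_pow, ← Polynomial.C_pow, ← h1, ← pow_mul, ← pow_add]
  rw [comp_eq_sum_left, Polynomial.sum, finset_sum_coeff]
  have hterm : ∀ n ∈ Q.support, (C (Q.coeff n) * g ^ n).coeff (q ^ n0)
      = ∑ i : Fin k, if n = q ^ (n0 - (i : ℕ)) ∧ (i : ℕ) ≤ n0 then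
          Q.coeff (q ^ (n0 - (i : ℕ))) * c i ^ q ^ (n0 - (i : ℕ)) else 0 := by
    intro n hn
    obtain ⟨j, rfl⟩ := hQ n (Polynomial.mem_support_iff.mp hn)
    rw [coeff_C_mul, hgpow j, finset_sum_coeff, Finset.mul_sum]
    refine Finset.sum_congr rfl fun i _ => ?_
    rw [coeff_C_mul, coeff_X_pow]
    by_cases hcond : (i : ℕ) + j = n0
    · have hle : (i : ℕ) ≤ n0 := by omega
      have h2 : n0 - (i : ℕ) = j := by omega
      rw [if_pos (by rw [hcond]), if_pos ⟨by rw [h2], hle⟩, h2, mul_one]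
    · rw [if_neg (fun h => hcond (hinj _ _ h.symm)), if_neg, mul_zero, mul_zero]
      rintro ⟨h2, h3⟩
      exact hcond (by have := hinj _ _ h2; omega)
  rw [Finset.sum_congr rfl hterm, Finset.sum_comm]
  refine Finset.sum_congr rfl fun i _ => ?_
  by_cases hi : (i : ℕ) ≤ n0
  · simp only [hi, and_true, if_pos]
    rw [Finset.sum_ite_eq' Q.support (q ^ (n0 - (i : ℕ)))]
    by_cases hb : q ^ (n0 - (i : ℕ)) ∈ Q.support
    · rw [if_pos hb]
    · rw [if_neg hb, Polynomial.notMem_support_iff.mp hb, zero_mul]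
  · simp [hi]

end Aux

/-- If `γ, γ^q, …, γ^{q^{m-1}}` are pairwise distinct and `Q_0, …, Q_s` are linearized
polynomials over `F_{q^m}`, not all zero, then the number of linearized polynomials `f` of
`q`-degree at most `k-1` (identified with coefficient vectors in `F_{q^m}^k`) solving
`Q_0(X) + ∑_{l=1}^s Q_l(f(γ^{l-1} X)) = 0` is at most `q^(m(s-1))`. -/
theorem stmt2 (q m s k : ℕ) (hq : IsPrimePow q) (hs : 1 ≤ s) (hk1 : 1 ≤ k) (hkm : k ≤ m)
    {F : Type*} [Field F] [Fintype F] (hF : Fintype.card F = q ^ m)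
    (γ : F) (hγ : ∀ i < m, ∀ j < m, i ≠ j → γ ^ q ^ i ≠ γ ^ q ^ j)
    (Q : Fin (s + 1) → Polynomial F) (hQlin : ∀ l, IsLinearized q (Q l)) (hQne : Q ≠ 0) :
    Set.ncard {a : Fin k → F |
        Q 0 + ∑ l : Fin s, (Q l.succ).comp ((linPoly q a).comp (C (γ ^ (l : ℕ)) * X)) = 0}
      ≤ q ^ (m * (s - 1)) := by
  classical
  obtain ⟨p, t, hpp, ht, hqpt⟩ := hq
  have hp : p.Prime := Nat.prime_iff.mpr hpp
  have hq : q = p ^ t := hqpt.symm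
  have hq2 : 2 ≤ q := by
    rw [hq]
    calc 2 = 2 ^ 1 := rfl
    _ ≤ p ^ t := Nat.pow_le_pow_left hp.two_le t |>.trans' (Nat.pow_le_pow_right (by norm_num) ht) |>.trans (le_refl _)
  have hm1 : 1 ≤ m := le_trans hk1 hkm
  -- characteristic
  haveI hcharP : CharP F p := by
    haveI : CharP F (ringChar F) := ringChar.charP F
    have hrp : (ringChar F).Prime := CharP.char_is_prime F (ringChar F)
    obtain ⟨n, _, hcard⟩ := FiniteField.card F (ringChar F)
    have : p ∣ ringChar F := by
      have h1 : p ∣ Fintype.card F := by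
        rw [hF, hq, ← pow_mul]
        exact dvd_pow_self p (by positivity)
      rw [hcard] at h1
      exact hp.dvd_of_dvd_pow h1
    rwa [(Nat.prime_dvd_prime_iff_eq hp hrp).mp this]
  haveI : Fact p.Prime := ⟨hp⟩
  set S := {a : Fin k → F |
      Q 0 + ∑ l : Fin s, (Q l.succ).comp ((linPoly q a).comp (C (γ ^ (l : ℕ)) * X)) = 0}
    with hSdef
  by_cases hex : ∃ n : ℕ, ∃ l : Fin s, (Q l.succ).coeff (q ^ n) ≠ 0
  case neg =>
    push_neg at hex
    have hz : ∀ l : Fin s, Q l.succ = 0 := by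
      intro l
      ext n
      rw [Polynomial.coeff_zero]
      by_contra hc
      obtain ⟨j, rfl⟩ := hQlin l.succ n hc
      exact hc (hex j l)
    have hQ0 : Q 0 ≠ 0 := by
      intro h0
      apply hQne
      funext l
      refine Fin.cases h0 (fun j => hz j) l
    have hSempty : S = ∅ := by
      rw [Set.eq_empty_iff_forall_notMem]
      intro a ha
      have ha' : Q 0 + ∑ l : Fin s,
          (Q l.succ).comp ((linPoly q a).comp (C (γ ^ (l : ℕ)) * X)) = 0 := ha
      rw [Finset.sum_eq_zero (fun l _ => by rw [hz l, Polynomial.zero_comp]), add_zero] at ha'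
      exact hQ0 ha'
    rw [hSempty]
    simp
  case pos =>
    set d := Nat.find hex with hddef
    obtain ⟨ld, hld⟩ : ∃ l : Fin s, (Q l.succ).coeff (q ^ d) ≠ 0 := Nat.find_spec hex
    have hdmin : ∀ j, j < d → ∀ l : Fin s, (Q l.succ).coeff (q ^ j) = 0 := by
      intro j hj l
      by_contra hc
      exact Nat.find_min hex hj ⟨l, hc⟩
    set B : Fin k → F := fun i =>
      ∑ l : Fin s, (Q l.succ).coeff (q ^ d) * (γ ^ (l : ℕ)) ^ q ^ ((i : ℕ) + d) with hBdef
    set T : Finset (Fin k) := Finset.univ.filter (fun i => B i = 0) with hTdef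
    -- Claim A : T.card ≤ s - 1
    have hcard_pow : ∀ (x : F) (c : ℕ), x ^ (q ^ m) ^ c = x := by
      intro x c
      rw [← hF]
      exact FiniteField.pow_card_pow c x
    have hgm : ∀ (x : F) (a : ℕ), x ^ q ^ a = x ^ q ^ (a % m) := by
      intro x a
      conv_lhs => rw [← Nat.mod_add_div a m]
      rw [pow_add, pow_mul x, pow_mul q m (a / m), hcard_pow]
    have hTcard : T.card ≤ s - 1 := by
      set P : Polynomial F := ∑ l : Fin s, C ((Q l.succ).coeff (q ^ d)) * X ^ (l : ℕ) with hPdef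
      have hPld : P.coeff (ld : ℕ) = (Q ld.succ).coeff (q ^ d) := by
        rw [hPdef, finset_sum_coeff]
        rw [Finset.sum_eq_single ld]
        · rw [coeff_C_mul, coeff_X_pow, if_pos rfl, mul_one]
        · intro l _ hlne
          rw [coeff_C_mul, coeff_X_pow,
            if_neg (fun h => hlne (Fin.val_injective h.symm)), mul_zero]
        · simp
      have hPne : P ≠ 0 := by
        intro h0
        rw [h0, Polynomial.coeff_zero] at hPld
        exact hld hPld.symm
      have hPdeg : P.natDegree ≤ s - 1 := by
        apply Polynomial.natDegree_sum_le_of_forall_le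
        intro l _
        refine le_trans (Polynomial.natDegree_C_mul_X_pow_le _ _) ?_
        have := l.isLt
        omega
      have hBeval : ∀ i : Fin k, P.eval (γ ^ q ^ (((i : ℕ) + d) % m)) = B i := by
        intro i
        rw [hPdef, hBdef, Polynomial.eval_finset_sum]
        refine Finset.sum_congr rfl fun l _ => ?_
        rw [eval_mul, eval_C, eval_pow, eval_X, pow_right_comm]
        conv_rhs => rw [hgm (γ ^ (l : ℕ)) ((i : ℕ) + d)]
      have hroot : ∀ i ∈ T, (γ ^ q ^ (((i : ℕ) + d) % m)) ∈ P.roots.toFinset := by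
        intro i hi
        rw [Multiset.mem_toFinset, Polynomial.mem_roots hPne]
        rw [Polynomial.IsRoot, hBeval i]
        exact (Finset.mem_filter.mp hi).2
      have hinjT : Set.InjOn (fun i : Fin k => γ ^ q ^ (((i : ℕ) + d) % m)) T := by
        intro i _ i' _ h
        by_contra hne
        have h1 : ((i : ℕ) + d) % m ≠ ((i' : ℕ) + d) % m := by
          intro heq
          apply hne
          have h2 : (i : ℕ) % m = (i' : ℕ) % m :=
            Nat.ModEq.add_right_cancel' d heq
          rw [Nat.mod_eq_of_lt (lt_of_lt_of_le i.isLt hkm),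
            Nat.mod_eq_of_lt (lt_of_lt_of_le i'.isLt hkm)] at h2
          exact Fin.ext h2
        exact hγ (((i : ℕ) + d) % m) (Nat.mod_lt _ hm1) (((i' : ℕ) + d) % m)
          (Nat.mod_lt _ hm1) h1 h
      calc T.card ≤ P.roots.toFinset.card :=
            Finset.card_le_card_of_injOn _ hroot hinjT
        _ ≤ Multiset.card P.roots := Multiset.toFinset_card_le _
        _ ≤ P.natDegree := Polynomial.card_roots' P
        _ ≤ s - 1 := hPdeg
    -- coefficient equations for solutions
    set W : (Fin k → F) → ℕ → F := fun x n0 => ∑ l : Fin s, ∑ i : Fin k,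
      if (i : ℕ) ≤ n0 then (Q l.succ).coeff (q ^ (n0 - (i : ℕ)))
        * (x i * (γ ^ (l : ℕ)) ^ q ^ (i : ℕ)) ^ q ^ (n0 - (i : ℕ)) else 0 with hWdef
    have hWeq : ∀ x ∈ S, ∀ n0 : ℕ, (Q 0).coeff (q ^ n0) + W x n0 = 0 := by
      intro x hx n0
      have hx' : Q 0 + ∑ l : Fin s,
          (Q l.succ).comp ((linPoly q x).comp (C (γ ^ (l : ℕ)) * X)) = 0 := hx
      have h1 := congrArg (fun P : Polynomial F => P.coeff (q ^ n0)) hx'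
      simp only [Polynomial.coeff_zero] at h1
      rw [Polynomial.coeff_add, finset_sum_coeff] at h1
      have h2 : ∀ l : Fin s,
          ((Q l.succ).comp ((linPoly q x).comp (C (γ ^ (l : ℕ)) * X))).coeff (q ^ n0)
          = ∑ i : Fin k, if (i : ℕ) ≤ n0 then (Q l.succ).coeff (q ^ (n0 - (i : ℕ)))
              * (x i * (γ ^ (l : ℕ)) ^ q ^ (i : ℕ)) ^ q ^ (n0 - (i : ℕ)) else 0 := by
        intro l
        rw [linPoly_comp_CX, coeff_comp_key hp hq hq2 _ (hQlin l.succ)]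
      rw [Finset.sum_congr rfl (fun l _ => h2 l)] at h1
      exact h1
    -- Claim B : solutions agreeing on T are equal
    have hkey : ∀ a ∈ S, ∀ a' ∈ S, (∀ i ∈ T, a i = a' i) → a = a' := by
      intro a ha a' ha' hagree
      by_contra hne
      have hbne : (Finset.univ.filter fun i : Fin k => a i - a' i ≠ 0).Nonempty := by
        rcases Function.ne_iff.mp hne with ⟨i, hi⟩
        exact ⟨i, Finset.mem_filter.mpr ⟨Finset.mem_univ _, sub_ne_zero_of_ne hi⟩⟩
      set i0 := Finset.min' _ hbne with hi0def
      have hi0mem := Finset.min'_mem _ hbne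
      have hbi0 : a i0 - a' i0 ≠ 0 := (Finset.mem_filter.mp hi0mem).2
      have hminlt : ∀ i : Fin k, i < i0 → a i - a' i = 0 := by
        intro i hlt
        by_contra hc
        exact absurd (Finset.min'_le _ i (Finset.mem_filter.mpr ⟨Finset.mem_univ _, hc⟩))
          (not_le.mpr hlt)
      set n0 := (i0 : ℕ) + d with hn0def
      have hW : W a n0 = W a' n0 :=
        add_left_cancel ((hWeq a ha n0).trans (hWeq a' ha' n0).symm)
      have hsubpow : ∀ (x y u : F) (j : ℕ),
          (x * u) ^ q ^ j - (y * u) ^ q ^ j = ((x - y) * u) ^ q ^ j := by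
        intro x y u j
        have h1 : q ^ j = p ^ (t * j) := by rw [hq, ← pow_mul]
        rw [h1, ← sub_pow_char_pow, sub_mul]
      have hdiff : W a n0 - W a' n0 = (a i0 - a' i0) ^ q ^ d * B i0 := by
        rw [hWdef, hBdef]
        simp only
        rw [← Finset.sum_sub_distrib, Finset.mul_sum]
        refine Finset.sum_congr rfl fun l _ => ?_
        rw [← Finset.sum_sub_distrib, Finset.sum_eq_single i0]
        · have hle : (i0 : ℕ) ≤ n0 := Nat.le_add_right _ _
          have hnd : n0 - (i0 : ℕ) = d := by omega
          rw [if_pos hle, if_pos hle, hnd, ← mul_sub, hsubpow, mul_pow, ← pow_mul, ← pow_add]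
          ring_nf
        · intro i _ hne_i
          by_cases hle : (i : ℕ) ≤ n0
          · rcases lt_or_gt_of_ne hne_i with hlt | hgt
            · rw [if_pos hle, if_pos hle, sub_eq_zero]
              have := hminlt i hlt
              have : a i = a' i := by linear_combination this
              rw [this]
            · have hcz : (Q l.succ).coeff (q ^ (n0 - (i : ℕ))) = 0 := by
                apply hdmin
                have : (i0 : ℕ) < (i : ℕ) := hgt
                omega
              rw [if_pos hle, if_pos hle, hcz, zero_mul, zero_mul, sub_self]
          · rw [if_neg hle, if_neg hle, sub_self]
        · intro h
          exact absurd (Finset.mem_univ i0) h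
      have h3 : (a i0 - a' i0) ^ q ^ d * B i0 = 0 := by rw [← hdiff, hW, sub_self]
      have hB0 : B i0 = 0 := by
        rcases mul_eq_zero.mp h3 with h | h
        · exact absurd h (pow_ne_zero _ hbi0)
        · exact h
      have : a i0 = a' i0 :=
        hagree i0 (Finset.mem_filter.mpr ⟨Finset.mem_univ _, hB0⟩)
      exact hbi0 (by rw [this, sub_self])
    -- counting
    have hinj2 : Set.InjOn (fun (a : Fin k → F) => (fun i : {x // x ∈ T} => a i)) S := by
      intro a ha a' ha' h
      exact hkey a ha a' ha' (fun i hi => congrFun h ⟨i, hi⟩)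
    calc S.ncard
        = ((fun (a : Fin k → F) => (fun i : {x // x ∈ T} => a i)) '' S).ncard :=
          (Set.ncard_image_of_injOn hinj2).symm
      _ ≤ (Set.univ : Set ({x // x ∈ T} → F)).ncard :=
          Set.ncard_le_ncard (Set.subset_univ _) Set.finite_univ
      _ = Fintype.card ({x // x ∈ T} → F) := by
          rw [Set.ncard_univ, Nat.card_eq_fintype_card]
      _ = (q ^ m) ^ T.card := by
          rw [Fintype.card_fun, hF, Fintype.card_coe]
      _ ≤ (q ^ m) ^ (s - 1) :=
          Nat.pow_le_pow_right (by positivity) hTcard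
      _ = q ^ (m * (s - 1)) := by rw [pow_mul]
end

section
/- Let γ ∈ F_{q^m} satisfy that γ, γ^q, ..., γ^{q^{k−1}} are pairwise distinct. Let Q_0, Q_1, ..., Q_s be linearized polynomials over F_{q^m}, and for 1 ≤ l ≤ s let q_{l,0} denote the coefficient of X^{q^0} = X in Q_l. Define the ordinary polynomial A(Z) = q_{1,0} + q_{2,0}·Z + ... + q_{s,0}·Z^{s−1}. If A(γ^{q^i}) ≠ 0 for every i with 0 ≤ i ≤ k−1, then there is at most one linearized polynomial f over F_{q^m} of q-degree at most k−1 satisfying Q_0(X) + ∑_{l=1}^{s} Q_l(f(γ^{l−1}X)) = 0 as a polynomial identity. -/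
open Polynomial

lemma linPoly_coeff {q : ℕ} (hq2 : 2 ≤ q) {F : Type*} [Field F] {D : ℕ} (a : Fin D → F)
    (j : Fin D) : (linPoly q a).coeff (q ^ (j : ℕ)) = a j := by
  rw [linPoly, finset_sum_coeff]
  rw [Finset.sum_eq_single j]
  · simp
  · intro i _ hij
    simp only [coeff_C_mul, coeff_X_pow]
    rw [if_neg, mul_zero]
    intro h
    exact hij (Fin.ext (Nat.pow_right_injective hq2 h.symm))
  · simp

lemma linPoly_comp_C_mul_X {q : ℕ} {F : Type*} [Field F] {D : ℕ} (a : Fin D → F) (u : F) :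
    (linPoly q a).comp (Polynomial.C u * Polynomial.X)
      = linPoly q (fun i => a i * u ^ q ^ (i : ℕ)) := by
  rw [linPoly, Polynomial.sum_comp, linPoly]
  refine Finset.sum_congr rfl fun i _ => ?_
  rw [mul_comp, C_comp, pow_comp, X_comp, mul_pow, ← C_pow, map_mul]
  ring

lemma linPoly_sub {q : ℕ} {F : Type*} [Field F] {D : ℕ} (a b : Fin D → F) :
    linPoly q a - linPoly q b = linPoly q (fun i => a i - b i) := by
  rw [linPoly, linPoly, linPoly, ← Finset.sum_sub_distrib]
  refine Finset.sum_congr rfl fun i _ => ?_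
  rw [← sub_mul, ← C_sub]

lemma comp_sub_of_linearized {q p e : ℕ} (hq : q = p ^ e) {F : Type*} [Field F]
    [hp : Fact p.Prime] [CharP F p] (Qp : Polynomial F) (hQ : IsLinearized q Qp)
    (P R : Polynomial F) : Qp.comp P - Qp.comp R = Qp.comp (P - R) := by
  rw [Polynomial.comp, Polynomial.comp, Polynomial.comp, eval₂_eq_sum, eval₂_eq_sum,
    eval₂_eq_sum, Polynomial.sum_def, Polynomial.sum_def, Polynomial.sum_def,
    ← Finset.sum_sub_distrib]
  refine Finset.sum_congr rfl fun n hn => ?_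
  obtain ⟨i, rfl⟩ := hQ n (mem_support_iff.mp hn)
  rw [← mul_sub]
  congr 1
  rw [hq, ← pow_mul, sub_pow_expChar_pow]

lemma comp_linPoly_coeff {q p e : ℕ} (hq : q = p ^ e) (hq2 : 2 ≤ q) {F : Type*} [Field F]
    [hp : Fact p.Prime] [CharP F p] (Qp : Polynomial F) (hQ : IsLinearized q Qp)
    {D : ℕ} (d : Fin D → F) (j : Fin D) (hd : ∀ t : Fin D, (t : ℕ) < (j : ℕ) → d t = 0) :
    (Qp.comp (linPoly q d)).coeff (q ^ (j : ℕ)) = Qp.coeff 1 * d j := by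
  rw [Polynomial.comp, eval₂_eq_sum, Polynomial.sum_def, finset_sum_coeff]
  rw [Finset.sum_eq_single 1]
  · rw [coeff_C_mul, pow_one, linPoly_coeff hq2]
  · intro n hn hn1
    obtain ⟨i, rfl⟩ := hQ n (mem_support_iff.mp hn)
    have hi : i ≠ 0 := by
      rintro rfl
      exact hn1 (pow_zero q)
    rw [coeff_C_mul]
    convert mul_zero _
    -- compute (linPoly q d) ^ (q ^ i) via Frobenius
    rw [linPoly, hq, ← pow_mul, sum_pow_char_pow, pow_mul, ← hq]
    rw [finset_sum_coeff]
    refine Finset.sum_eq_zero fun t _ => ?_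
    rw [mul_pow, ← C_pow, ← pow_mul, ← pow_add, coeff_C_mul, coeff_X_pow]
    rcases eq_or_ne (q ^ (j : ℕ)) (q ^ ((t : ℕ) + i)) with h | h
    · have hji : (j : ℕ) = (t : ℕ) + i := Nat.pow_right_injective hq2 h
      have ht : (t : ℕ) < (j : ℕ) := by omega
      rw [hd t ht, zero_pow, zero_mul]
      positivity
    · rw [if_neg h, mul_zero]
  · intro h1
    rw [notMem_support_iff.mp h1, map_zero, zero_mul, coeff_zero]

/-- If `A(Z) = ∑_{l=1}^s q_{l,0} Z^{l-1}` (where `q_{l,0}` is the coefficient of `X` in `Q_l`)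
satisfies `A(γ^{q^i}) ≠ 0` for all `0 ≤ i ≤ k-1`, then there is at most one linearized
polynomial `f` of `q`-degree at most `k-1` (identified with its coefficient vector) solving
`Q_0(X) + ∑_{l=1}^s Q_l(f(γ^{l-1} X)) = 0`. -/
theorem stmt3 (q m s k : ℕ) (hq : IsPrimePow q) (hs : 1 ≤ s) (hk : 1 ≤ k)
    {F : Type*} [Field F] [Fintype F] (hF : Fintype.card F = q ^ m)
    (γ : F) (hγ : ∀ i < k, ∀ j < k, i ≠ j → γ ^ q ^ i ≠ γ ^ q ^ j)
    (Q : Fin (s + 1) → Polynomial F) (hQlin : ∀ l, IsLinearized q (Q l))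
    (hA : ∀ i < k, ∑ l : Fin s, (Q l.succ).coeff 1 * (γ ^ q ^ i) ^ (l : ℕ) ≠ 0)
    (a b : Fin k → F)
    (ha : Q 0 + ∑ l : Fin s, (Q l.succ).comp ((linPoly q a).comp (C (γ ^ (l : ℕ)) * X)) = 0)
    (hb : Q 0 + ∑ l : Fin s, (Q l.succ).comp ((linPoly q b).comp (C (γ ^ (l : ℕ)) * X)) = 0) :
    a = b := by
  classical
  obtain ⟨p, e, hpp, he, hpe⟩ := hq
  have hp : p.Prime := hpp.nat_prime
  haveI : Fact p.Prime := ⟨hp⟩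
  have hqe : q = p ^ e := hpe.symm
  have hq2 : 2 ≤ q := by
    rw [hqe]
    calc 2 ≤ p := hp.two_le
    _ ≤ p ^ e := Nat.le_self_pow (by omega) p
  -- characteristic of F is p
  obtain ⟨c, hc⟩ := CharP.exists F
  obtain ⟨n, hcp, hcard⟩ := FiniteField.card F c
  have hm : 0 < m := by
    rcases Nat.eq_zero_or_pos m with rfl | h
    · rw [pow_zero] at hF
      have := Fintype.one_lt_card (α := F)
      omega
    · exact h
  have hpc : p = c := by
    have hdvd : p ∣ c ^ (n : ℕ) := by
      rw [← hcard, hF, hqe, ← pow_mul]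
      exact dvd_pow_self p (by positivity)
    exact (Nat.prime_dvd_prime_iff_eq hp hcp).mp (hp.dvd_of_dvd_pow hdvd)
  haveI : CharP F p := hpc ▸ hc
  -- suppose a ≠ b, take the minimal differing index
  by_contra hne
  have hSne : (Finset.univ.filter fun i : Fin k => a i ≠ b i).Nonempty := by
    by_contra h
    rw [Finset.not_nonempty_iff_eq_empty, Finset.filter_eq_empty_iff] at h
    exact hne (funext fun i => not_ne_iff.mp (h (Finset.mem_univ i)))
  set S := Finset.univ.filter fun i : Fin k => a i ≠ b i with hS
  set j := S.min' hSne with hj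
  have hjS : j ∈ S := S.min'_mem hSne
  have hjne : a j ≠ b j := (Finset.mem_filter.mp hjS).2
  have hmin : ∀ t : Fin k, (t : ℕ) < (j : ℕ) → a t - b t = 0 := by
    intro t ht
    by_contra h
    have htS : t ∈ S := Finset.mem_filter.mpr ⟨Finset.mem_univ t, sub_ne_zero.mp h⟩
    exact absurd (S.min'_le t htS) (not_le.mpr (Fin.lt_def.mpr ht))
  -- subtract the two equations
  have hE : ∑ l : Fin s,
      (Q l.succ).comp ((linPoly q (fun i => a i - b i)).comp (C (γ ^ (l : ℕ)) * X)) = 0 := by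
    have h := congrArg₂ (· - ·) ha hb
    simp only [add_sub_add_left_eq_sub, sub_zero, ← Finset.sum_sub_distrib] at h
    rw [← h]
    refine Finset.sum_congr rfl fun l _ => ?_
    rw [comp_sub_of_linearized hqe (Q l.succ) (hQlin l.succ), ← sub_comp, linPoly_sub]
  -- take the coefficient at q ^ j
  have hcoeff := congrArg (fun P : Polynomial F => P.coeff (q ^ (j : ℕ))) hE
  simp only [finset_sum_coeff, coeff_zero] at hcoeff
  have hterm : ∀ l : Fin s,
      ((Q l.succ).comp ((linPoly q (fun i => a i - b i)).comp
        (C (γ ^ (l : ℕ)) * X))).coeff (q ^ (j : ℕ))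
      = (Q l.succ).coeff 1 * ((a j - b j) * (γ ^ q ^ (j : ℕ)) ^ (l : ℕ)) := by
    intro l
    rw [linPoly_comp_C_mul_X]
    rw [comp_linPoly_coeff hqe hq2 (Q l.succ) (hQlin l.succ)
      (fun i => (a i - b i) * (γ ^ (l : ℕ)) ^ q ^ (i : ℕ)) j
      (fun t ht => by show (a t - b t) * _ = 0; rw [hmin t ht, zero_mul])]
    congr 1
    rw [← pow_mul, mul_comm (l : ℕ), pow_mul]
  rw [Finset.sum_congr rfl (fun l _ => hterm l)] at hcoeff
  have : (a j - b j) * ∑ l : Fin s, (Q l.succ).coeff 1 * (γ ^ q ^ (j : ℕ)) ^ (l : ℕ) = 0 := by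
    rw [Finset.mul_sum, ← hcoeff]
    refine Finset.sum_congr rfl fun l _ => ?_
    ring
  rcases mul_eq_zero.mp this with h | h
  · exact hjne (sub_eq_zero.mp h)
  · exact hA (j : ℕ) j.isLt h
end

section
/- Let s ≥ 1, k ≥ 1, and r ≥ 0, and let (x_i, y_{i,1}, ..., y_{i,s}) for i = 1, ..., r be arbitrary points of F_{q^m}^{s+1}. Set d = ⌈(r + s(k−1) + 1)/(s+1)⌉ and assume d ≥ k. Then there exist linearized polynomials Q_0, Q_1, ..., Q_s over F_{q^m}, not all zero, such that Q_0 has q-degree at most d−1, each Q_j (1 ≤ j ≤ s) has q-degree at most d−k, and Q_0(x_i) + ∑_{j=1}^{s} Q_j(y_{i,j}) = 0 for every i = 1, ..., r. -/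
open Polynomial

lemma linPoly_eval (q : ℕ) {F : Type*} [Field F] {D : ℕ} (a : Fin D → F) (x : F) :
    (linPoly q a).eval x = ∑ i : Fin D, a i * x ^ (q ^ (i : ℕ)) := by
  simp [linPoly, Polynomial.eval_finset_sum]

/-- Existence of the interpolation polynomial: for arbitrary points
`(x_i, y_{i,1}, …, y_{i,s}) ∈ F_{q^m}^{s+1}`, `i = 1, …, r`, and
`d = ⌈(r + s(k-1) + 1)/(s+1)⌉ ≥ k`, there are linearized polynomials `Q_0, …, Q_s`,
not all zero, with `Q_0` of `q`-degree at most `d-1` and `Q_j` of `q`-degree at most `d-k`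
for `1 ≤ j ≤ s`, such that `Q_0(x_i) + ∑_{j=1}^s Q_j(y_{i,j}) = 0` for all `i`. -/
theorem stmt4 (q m s k r d : ℕ) (hq : IsPrimePow q) (hs : 1 ≤ s) (hk : 1 ≤ k)
    {F : Type*} [Field F] [Fintype F] (hF : Fintype.card F = q ^ m)
    (x : Fin r → F) (y : Fin r → Fin s → F)
    (hd : d = (r + s * (k - 1) + 1 + s) / (s + 1)) (hkd : k ≤ d) :
    ∃ (b0 : Fin d → F) (b : Fin s → Fin (d - k + 1) → F),
      ¬(b0 = 0 ∧ b = 0) ∧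
      ∀ i, (linPoly q b0).eval (x i) + ∑ j : Fin s, (linPoly q (b j)).eval (y i j) = 0 := by
  -- dimension count
  have hdim : r < d + s * (d - k + 1) := by
    have h0 : r + s * (k - 1) + 1 + s < (s + 1) * (d + 1) := by
      rw [hd]; exact Nat.lt_mul_div_succ _ (by omega)
    have h1 : s * (k - 1) = s * k - s := by rw [Nat.mul_sub]; omega
    have h2 : s * (d - k + 1) = s * d - s * k + s := by rw [Nat.mul_add, Nat.mul_sub]; omega
    have h3 : s * k ≤ s * d := Nat.mul_le_mul_left _ hkd
    have h4 : s ≤ s * k := Nat.le_mul_of_pos_right _ hk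
    have h5 : (s + 1) * (d + 1) = s * d + d + s + 1 := by ring
    omega
  -- the evaluation linear map
  set e := d - k + 1 with he
  let φ : ((Fin d → F) × (Fin s → Fin e → F)) →ₗ[F] (Fin r → F) :=
    { toFun := fun p i =>
        (∑ t : Fin d, p.1 t * (x i) ^ (q ^ (t : ℕ))) +
          ∑ j : Fin s, ∑ t : Fin e, p.2 j t * (y i j) ^ (q ^ (t : ℕ))
      map_add' := by
        intro p1 p2
        funext i
        simp only [Prod.fst_add, Prod.snd_add, Pi.add_apply, add_mul, Finset.sum_add_distrib]
        ring
      map_smul' := by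
        intro c p
        funext i
        simp only [Prod.smul_fst, Prod.smul_snd, Pi.smul_apply, smul_eq_mul, RingHom.id_apply,
          Finset.mul_sum, mul_assoc, Finset.sum_add_distrib, mul_add] }
  have hnotinj : ¬ Function.Injective φ := by
    intro hinj
    have hle := LinearMap.finrank_le_finrank_of_injective hinj
    have h1 : Module.finrank F ((Fin d → F) × (Fin s → Fin e → F)) = d + s * e := by
      simp [Module.finrank_prod, Module.finrank_pi_fintype]
    have h2 : Module.finrank F (Fin r → F) = r := by simp
    rw [h1, h2] at hle
    omega
  have hker : ∃ v : (Fin d → F) × (Fin s → Fin e → F), v ≠ 0 ∧ φ v = 0 := by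
    rw [← LinearMap.ker_eq_bot] at hnotinj
    obtain ⟨v, hv, hv0⟩ := Submodule.exists_mem_ne_zero_of_ne_bot hnotinj
    exact ⟨v, hv0, hv⟩
  obtain ⟨⟨b0, b⟩, hvne, hv0⟩ := hker
  refine ⟨b0, b, ?_, ?_⟩
  · rintro ⟨h1, h2⟩
    exact hvne (by simp [Prod.ext_iff, h1, h2])
  · intro i
    have := congrFun hv0 i
    simpa [φ, linPoly_eval] using this
end

section
/- Let α_1, ..., α_n be elements of F_{q^m} that are linearly independent over F_q, let γ ∈ F_{q^m}, let s ≥ 1, and let f be a linearized polynomial over F_{q^m}. Let V be the F_q-linear span inside F_{q^m}^{s+1} of the n vectors (α_i, f(α_i), f(γα_i), ..., f(γ^{s−1}α_i)), i = 1, ..., n. Let U be an F_q-subspace of F_{q^m}^{s+1} whose intersection with V has F_q-dimension at least n−ρ. Let Q_0, Q_1, ..., Q_s be linearized polynomials over F_{q^m} such that Q_0(x) + ∑_{i=1}^{s} Q_i(y_i) = 0 for every (x, y_1, ..., y_s) ∈ U. Then the linearized polynomial E(X) = Q_0(X) + ∑_{i=1}^{s} Q_i(f(γ^{i−1}X)) has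 at least n−ρ roots in F_{q^m} that are linearly independent over F_q. -/
open Polynomial

lemma lin_eval_add {F : Type*} [Field F] {p k : ℕ} [Fact p.Prime] [CharP F p]
    {f : Polynomial F} (hf : IsLinearized (p ^ k) f) (x y : F) :
    f.eval (x + y) = f.eval x + f.eval y := by
  rw [eval_eq_sum, eval_eq_sum, eval_eq_sum, Polynomial.sum_def, Polynomial.sum_def,
    Polynomial.sum_def, ← Finset.sum_add_distrib]
  refine Finset.sum_congr rfl fun nn hn => ?_
  obtain ⟨i, rfl⟩ := hf nn (Polynomial.mem_support_iff.mp hn)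
  rw [← pow_mul, add_pow_char_pow, mul_add]

lemma lin_eval_mul {F : Type*} [Field F] {q : ℕ} {f : Polynomial F} (hf : IsLinearized q f)
    {c : F} (hc : c ^ q = c) (x : F) : f.eval (c * x) = c * f.eval x := by
  rw [eval_eq_sum, eval_eq_sum, Polynomial.sum_def, Polynomial.sum_def, Finset.mul_sum]
  refine Finset.sum_congr rfl fun nn hn => ?_
  obtain ⟨i, rfl⟩ := hf nn (Polynomial.mem_support_iff.mp hn)
  have hci : ∀ j, c ^ q ^ j = c := by
    intro j
    induction j with
    | zero => simp
    | succ j ih => rw [pow_succ, pow_mul, ih, hc]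
  rw [mul_pow, hci]; ring

/-- If `V` is the span of the codeword vectors `(α_i, f(α_i), f(γα_i), …, f(γ^{s-1}α_i))`,
`U` is an `F_q`-subspace of `F_{q^m}^{s+1}` with `dim (U ⊓ V) ≥ n - ρ`, and `Q_0, …, Q_s`
are linearized polynomials vanishing on `U`, then
`E(X) = Q_0(X) + ∑_{i=1}^s Q_i(f(γ^{i-1} X))` has at least `n - ρ` roots in `F_{q^m}` that
are linearly independent over `F_q`. -/
theorem stmt5 (q m s n ρ : ℕ) (hq : IsPrimePow q) (hs : 1 ≤ s)
    {K F : Type*} [Field K] [Field F] [Algebra K F] [Fintype K] [Fintype F]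
    (hK : Fintype.card K = q) (hF : Fintype.card F = q ^ m)
    (α : Fin n → F) (hα : LinearIndependent K α) (γ : F)
    (f : Polynomial F) (hf : IsLinearized q f)
    (U : Submodule K (Fin (s + 1) → F))
    (hUV : n - ρ ≤ Module.finrank K
      ↥(U ⊓ Submodule.span K (Set.range fun i : Fin n =>
          Fin.cons (α i) fun j : Fin s => f.eval (γ ^ (j : ℕ) * α i))))
    (Q : Fin (s + 1) → Polynomial F) (hQlin : ∀ l, IsLinearized q (Q l))
    (hvanish : ∀ w ∈ U, (Q 0).eval (w 0) + ∑ i : Fin s, (Q i.succ).eval (w i.succ) = 0) :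
    ∃ β : Fin (n - ρ) → F, LinearIndependent K β ∧
      ∀ i, (Q 0 + ∑ l : Fin s, (Q l.succ).comp (f.comp (C (γ ^ (l : ℕ)) * X))).eval (β i) = 0 := by
  classical
  -- extract the characteristic
  obtain ⟨p, k, hpp, hk, rfl⟩ := hq
  have hp : p.Prime := hpp.nat_prime
  haveI : Fact p.Prime := ⟨hp⟩
  haveI : CharP F p := by
    have h0 : ((p ^ (k * m) : ℕ) : F) = 0 := by
      rw [pow_mul, ← hF]; exact FiniteField.cast_card_eq_zero F
    have hdvd : ringChar F ∣ p ^ (k * m) := (ringChar.spec F _).mp h0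
    have hrp : (ringChar F).Prime := CharP.char_is_prime F (ringChar F)
    have : ringChar F = p :=
      (Nat.prime_dvd_prime_iff_eq hrp hp).mp (hrp.dvd_of_dvd_pow hdvd)
    have h := ringChar.charP F
    rwa [this] at h
  -- the evaluation map of a linearized polynomial is K-linear after scaling
  have hsm : ∀ (c : K) (x : F), f.eval ((algebraMap K F c) * x) = algebraMap K F c * f.eval x := by
    intro c x
    refine lin_eval_mul hf ?_ x
    rw [← map_pow, ← hK, FiniteField.pow_card]
  -- the codeword map as a linear map
  set T : F →ₗ[K] (Fin (s + 1) → F) :=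
    { toFun := fun x => Fin.cons x fun j : Fin s => f.eval (γ ^ (j : ℕ) * x)
      map_add' := by
        intro x y
        funext j
        refine Fin.cases ?_ (fun j => ?_) j
        · simp
        · simp only [Fin.cons_succ, Pi.add_apply, mul_add]
          exact lin_eval_add hf _ _
      map_smul' := by
        intro c x
        funext j
        refine Fin.cases ?_ (fun j => ?_) j
        · simp
        · simp only [Fin.cons_succ, Pi.smul_apply, RingHom.id_apply]
          rw [Algebra.smul_def, Algebra.smul_def, mul_left_comm, hsm] } with hT
  set V : Submodule K (Fin (s + 1) → F) := Submodule.span K (Set.range fun i : Fin n =>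
      Fin.cons (α i) fun j : Fin s => f.eval (γ ^ (j : ℕ) * α i)) with hV
  have hVeq : V = Submodule.map T (Submodule.span K (Set.range α)) := by
    rw [hV, Submodule.map_span, ← Set.range_comp]
    rfl
  have hVfix : ∀ v ∈ V, T (v 0) = v := by
    intro v hv
    rw [hVeq] at hv
    obtain ⟨x, -, rfl⟩ := hv
    have : T x 0 = x := rfl
    rw [this]
  -- pick a linearly independent family in U ⊓ V
  haveI : Module.Finite K (Fin (s + 1) → F) := Module.Finite.of_finite
  set W := U ⊓ V with hW
  let b := Module.finBasis K ↥W
  have hle : n - ρ ≤ Module.finrank K ↥W := hUV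
  let w : Fin (n - ρ) → ↥W := fun i => b (Fin.castLE hle i)
  have hwli : LinearIndependent K w :=
    b.linearIndependent.comp _ (Fin.castLE_injective hle)
  refine ⟨fun i => (w i : Fin (s + 1) → F) 0, ?_, ?_⟩
  · -- linear independence
    have hval : LinearIndependent K fun i => (w i : Fin (s + 1) → F) :=
      hwli.map' W.subtype W.ker_subtype
    have hcomp : (T ∘ fun i => (w i : Fin (s + 1) → F) 0) =
        fun i => (w i : Fin (s + 1) → F) := by
      funext i
      exact hVfix _ ((w i).2.2)
    exact LinearIndependent.of_comp T (hcomp ▸ hval)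
  · -- roots
    intro i
    have hmemU : (w i : Fin (s + 1) → F) ∈ U := (w i).2.1
    have hfix := hVfix _ ((w i).2.2)
    have hzero := hvanish _ hmemU
    have hcs : ∀ l : Fin s, (w i : Fin (s + 1) → F) l.succ
        = f.eval (γ ^ (l : ℕ) * (w i : Fin (s + 1) → F) 0) := by
      intro l
      conv_lhs => rw [← hfix]
      simp [hT]
    simp only [hcs] at hzero
    simpa [eval_finset_sum, eval_comp] using hzero
end

section
/- Let g, h, k, s be positive integers with 1 ≤ s ≤ h and k ≥ 1, let γ ∈ F_{q^m}, and let y_{i,j} ∈ F_{q^m} be arbitrary for 0 ≤ i ≤ g−1 and 0 ≤ j ≤ h−1. Set d = ⌈(g(h−s+1) + s(k−1) + 1)/(s+1)⌉ and assume d ≥ k. Then there exist linearized polynomials Q_0, Q_1, ..., Q_s over F_{q^m}, not all zero, such that Q_0 has q-degree at most d−1, each Q_l (1 ≤ l ≤ s) has q-degree at most d−k, and Q_0(γ^{ih+j}) + ∑_{l=1}^{s} Q_l(y_{i,j+l−1}) = 0 for all i = 0, 1, ..., g−1 and j = 0, 1, ..., h−s. -/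
/-!
The interpolation conditions are `g (h - s + 1)` homogeneous linear equations in the
`d + s (d - k + 1)` coefficients of `Q_0, …, Q_s`, because evaluating a linearized polynomial
is linear in its coefficients. The choice of `d` as a ceiling makes the number of unknowns exceed
the number of equations, so the system has a nonzero solution.
-/

open Polynomial

section LinearizedInterpolation

variable (q : ℕ) {F : Type*} [Field F]

noncomputable def linPolyEval {D : ℕ} (x : F) : (Fin D → F) →ₗ[F] F :=
  Fintype.linearCombination F fun i : Fin D => x ^ q ^ (i : ℕ)

lemma linPolyEval_apply {D : ℕ} (x : F) (a : Fin D → F) :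
    linPolyEval q x a = (linPoly q a).eval x := by
  simp [linPolyEval, linPoly, Fintype.linearCombination_apply, eval_finsetSum]

variable {E : Type*} {s D D' : ℕ}

noncomputable def interpolationMap (x : E → F) (y : E → Fin s → F) :
    (Fin D → F) × (Fin s → Fin D' → F) →ₗ[F] (E → F) :=
  LinearMap.pi fun e =>
    (linPolyEval q (x e)).comp (LinearMap.fst F _ _) +
      ∑ l, (linPolyEval q (y e l)).comp ((LinearMap.proj l).comp (LinearMap.snd F _ _))

lemma interpolationMap_apply (x : E → F) (y : E → Fin s → F) (b₀ : Fin D → F)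
    (b : Fin s → Fin D' → F) (e : E) :
    interpolationMap q x y (b₀, b) e =
      (linPoly q b₀).eval (x e) + ∑ l, (linPoly q (b l)).eval (y e l) := by
  simp [interpolationMap, LinearMap.sum_apply, linPolyEval_apply]

theorem exists_linPoly_interpolation [Fintype E] (x : E → F) (y : E → Fin s → F)
    (hE : Fintype.card E < D + s * D') :
    ∃ (b₀ : Fin D → F) (b : Fin s → Fin D' → F), ¬(b₀ = 0 ∧ b = 0) ∧
      ∀ e, (linPoly q b₀).eval (x e) + ∑ l, (linPoly q (b l)).eval (y e l) = 0 := by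
  have hrank : Module.finrank F (E → F) <
      Module.finrank F ((Fin D → F) × (Fin s → Fin D' → F)) := by
    simpa [Module.finrank_prod, Module.finrank_pi, Module.finrank_pi_fintype, mul_comm] using hE
  obtain ⟨⟨b₀, b⟩, hker, hne⟩ :=
    (Submodule.ne_bot_iff _).mp (LinearMap.ker_ne_bot_of_finrank_lt hrank)
  refine ⟨b₀, b, fun h => hne (Prod.ext h.1 h.2), fun e => ?_⟩
  rw [← interpolationMap_apply q x y]
  exact congrFun (LinearMap.mem_ker.mp hker) e

end LinearizedInterpolation

lemma lt_add_mul_of_eq_ceil {n s k d : ℕ} (hd : d = (n + s * (k - 1) + 1 + s) / (s + 1)) :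
    n < d + s * (d - k + 1) := by
  have hceil : n + s * (k - 1) + 1 ≤ (s + 1) * d := by
    have := Nat.div_add_mod (n + s * (k - 1) + 1 + s) (s + 1)
    have := Nat.mod_lt (n + s * (k - 1) + 1 + s) (Nat.succ_pos s)
    rw [hd]
    linarith
  have hsplit : s * d ≤ s * (d - k + 1) + s * (k - 1) := by
    rw [← mul_add]
    exact Nat.mul_le_mul_left s (by omega)
  linarith

theorem stmt8_general (q g h k s d : ℕ)
    {F : Type*} [Field F]
    (γ : F) (y : ℕ → ℕ → F)
    (hd : d = (g * (h - s + 1) + s * (k - 1) + 1 + s) / (s + 1)) :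
    ∃ (b0 : Fin d → F) (b : Fin s → Fin (d - k + 1) → F),
      ¬(b0 = 0 ∧ b = 0) ∧
      ∀ i < g, ∀ j, j + s ≤ h →
        (linPoly q b0).eval (γ ^ (i * h + j)) +
          ∑ l : Fin s, (linPoly q (b l)).eval (y i (j + (l : ℕ))) = 0 := by
  obtain ⟨b₀, b, hne, hb⟩ := exists_linPoly_interpolation q (E := Fin g × Fin (h - s + 1))
    (fun e => γ ^ (e.1 * h + e.2)) (fun e l => y e.1 (e.2 + l))
    (by simpa using lt_add_mul_of_eq_ceil hd)
  exact ⟨b₀, b, hne, fun i hi j hj => hb (⟨i, hi⟩, ⟨j, by omega⟩)⟩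

/-- Existence of the interpolation polynomial for folded Gabidulin codes: for arbitrary
received symbols `y_{i,j} ∈ F_{q^m}` (`0 ≤ i ≤ g-1`, `0 ≤ j ≤ h-1`) and
`d = ⌈(g(h-s+1) + s(k-1) + 1)/(s+1)⌉ ≥ k`, there are linearized polynomials `Q_0, …, Q_s`,
not all zero, with `Q_0` of `q`-degree at most `d-1` and each `Q_l` of `q`-degree at most
`d-k`, such that `Q_0(γ^{ih+j}) + ∑_{l=1}^s Q_l(y_{i,j+l-1}) = 0` for all `0 ≤ i ≤ g-1` and
`0 ≤ j ≤ h-s`. -/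
theorem stmt8 (q m g h k s d : ℕ) (hq : IsPrimePow q)
    (hg : 1 ≤ g) (hh : 1 ≤ h) (hs : 1 ≤ s) (hsh : s ≤ h) (hk : 1 ≤ k)
    {F : Type*} [Field F] [Fintype F] (hF : Fintype.card F = q ^ m)
    (γ : F) (y : ℕ → ℕ → F)
    (hd : d = (g * (h - s + 1) + s * (k - 1) + 1 + s) / (s + 1)) (hkd : k ≤ d) :
    ∃ (b0 : Fin d → F) (b : Fin s → Fin (d - k + 1) → F),
      ¬(b0 = 0 ∧ b = 0) ∧
      ∀ i < g, ∀ j, j + s ≤ h →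
        (linPoly q b0).eval (γ ^ (i * h + j)) +
          ∑ l : Fin s, (linPoly q (b l)).eval (y i (j + (l : ℕ))) = 0 :=
  stmt8_general q g h k s d γ y hd
end

section
/- Let n = g·h with g, h positive integers, let 1 ≤ s ≤ h, and let γ ∈ F_{q^m} be such that 1, γ, γ^2, ..., γ^{n−1} are linearly independent over F_q. Let β_1, ..., β_w be elements of the F_q-linear span of {1, γ^h, γ^{2h}, ..., γ^{(g−1)h}} that are linearly independent over F_q. Then the w·(h−s+1) elements γ^j·β_i, for 1 ≤ i ≤ w and 0 ≤ j ≤ h−s, are linearly independent over F_q. -/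
/-- If `1, γ, …, γ^{n-1}` (with `n = gh`) are linearly independent over `F_q` and
`β_1, …, β_w` are `F_q`-linearly independent elements of the `F_q`-span of
`{1, γ^h, …, γ^{(g-1)h}}`, then the `w(h-s+1)` elements `γ^j β_i`
(`1 ≤ i ≤ w`, `0 ≤ j ≤ h-s`) are linearly independent over `F_q`. -/
theorem stmt9 (q m n g h s w : ℕ) (hq : IsPrimePow q)
    (hg : 1 ≤ g) (hh : 1 ≤ h) (hn : n = g * h) (hs : 1 ≤ s) (hsh : s ≤ h)
    {K F : Type*} [Field K] [Field F] [Algebra K F] [Fintype K] [Fintype F]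
    (hK : Fintype.card K = q) (hF : Fintype.card F = q ^ m)
    (γ : F) (hγ : LinearIndependent K fun i : Fin n => γ ^ (i : ℕ))
    (β : Fin w → F)
    (hβmem : ∀ i, β i ∈ Submodule.span K (Set.range fun l : Fin g => γ ^ ((l : ℕ) * h)))
    (hβ : LinearIndependent K β) :
    LinearIndependent K fun p : Fin w × Fin (h - s + 1) => γ ^ ((p.2 : ℕ)) * β p.1 := by
  classical
  have hc : ∀ i, ∃ c : Fin g → K, ∑ l, c l • γ ^ ((l : ℕ) * h) = β i := fun i =>
    (Submodule.mem_span_range_iff_exists_fun K).mp (hβmem i)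
  choose c hc using hc
  have hjlt : ∀ j : Fin (h - s + 1), (j : ℕ) < h := by
    intro j; have := j.2; omega
  have hlt : ∀ (p : Fin g × Fin (h - s + 1)), (p.1 : ℕ) * h + (p.2 : ℕ) < n := by
    rintro ⟨l, j⟩
    have hl : (l : ℕ) < g := l.2
    calc (l : ℕ) * h + (j : ℕ) < (l : ℕ) * h + h := by have := hjlt j; omega
      _ = ((l : ℕ) + 1) * h := by ring
      _ ≤ g * h := Nat.mul_le_mul_right h hl
      _ = n := hn.symm
  set φ : Fin g × Fin (h - s + 1) → Fin n := fun p => ⟨(p.1 : ℕ) * h + (p.2 : ℕ), hlt p⟩ with hφ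
  have hdiv : ∀ (l : Fin g) (j : Fin (h - s + 1)), ((l : ℕ) * h + (j : ℕ)) / h = (l : ℕ) := by
    intro l j
    rw [add_comm, Nat.add_mul_div_right _ _ (by omega : 0 < h),
      Nat.div_eq_of_lt (hjlt j), zero_add]
  have hφinj : Function.Injective φ := by
    rintro ⟨l1, j1⟩ ⟨l2, j2⟩ he
    have he' : (l1 : ℕ) * h + (j1 : ℕ) = (l2 : ℕ) * h + (j2 : ℕ) := congrArg Fin.val he
    have hl : (l1 : ℕ) = (l2 : ℕ) := by rw [← hdiv l1 j1, ← hdiv l2 j2, he']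
    have hj : (j1 : ℕ) = (j2 : ℕ) := by
      have := he'; rw [hl] at this; exact Nat.add_left_cancel this
    exact Prod.ext (Fin.ext hl) (Fin.ext hj)
  rw [Fintype.linearIndependent_iff]
  intro f hf
  have expand : ∀ p : Fin w × Fin (h - s + 1), f p • (γ ^ ((p.2 : ℕ)) * β p.1)
      = ∑ l : Fin g, (f p * c p.1 l) • γ ^ ((l : ℕ) * h + (p.2 : ℕ)) := by
    intro p
    rw [← hc p.1, Finset.mul_sum, Finset.smul_sum]
    refine Finset.sum_congr rfl fun l _ => ?_
    rw [mul_smul_comm, smul_smul, pow_add, mul_comm (γ ^ ((l : ℕ) * h))]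
  have key : ∑ p : Fin g × Fin (h - s + 1),
      (∑ i, f (i, p.2) * c i p.1) • γ ^ ((p.1 : ℕ) * h + (p.2 : ℕ)) = 0 := by
    have e1 : ∑ p : Fin w × Fin (h - s + 1), f p • (γ ^ ((p.2 : ℕ)) * β p.1)
        = ∑ p : Fin w × Fin (h - s + 1), ∑ l : Fin g,
            (f p * c p.1 l) • γ ^ ((l : ℕ) * h + (p.2 : ℕ)) :=
      Finset.sum_congr rfl fun p _ => expand p
    calc ∑ p : Fin g × Fin (h - s + 1),
          (∑ i, f (i, p.2) * c i p.1) • γ ^ ((p.1 : ℕ) * h + (p.2 : ℕ))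
        = ∑ p : Fin g × Fin (h - s + 1), ∑ i,
            (f (i, p.2) * c i p.1) • γ ^ ((p.1 : ℕ) * h + (p.2 : ℕ)) := by
          simp [Finset.sum_smul]
      _ = ∑ p : Fin w × Fin (h - s + 1), f p • (γ ^ ((p.2 : ℕ)) * β p.1) := by
          rw [e1, Fintype.sum_prod_type, Fintype.sum_prod_type, Finset.sum_comm]
          exact (Finset.sum_congr rfl fun j _ => Finset.sum_comm).trans Finset.sum_comm
      _ = 0 := hf
  have hzero : ∀ p : Fin g × Fin (h - s + 1), ∑ i, f (i, p.2) * c i p.1 = 0 := by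
    have hcomp := hγ.comp φ hφinj
    have := Fintype.linearIndependent_iff.mp hcomp
      (fun p => ∑ i, f (i, p.2) * c i p.1) ?_
    · exact this
    · simpa [hφ] using key
  intro p
  have hβj : ∑ i, f (i, p.2) • β i = 0 := by
    calc ∑ i, f (i, p.2) • β i
        = ∑ i, ∑ l, (f (i, p.2) * c i l) • γ ^ ((l : ℕ) * h) := by
          refine Finset.sum_congr rfl fun i _ => ?_
          rw [← hc i, Finset.smul_sum]
          exact Finset.sum_congr rfl fun l _ => smul_smul _ _ _
      _ = ∑ l, (∑ i, f (i, p.2) * c i l) • γ ^ ((l : ℕ) * h) := by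
          rw [Finset.sum_comm]
          exact Finset.sum_congr rfl fun l _ => by rw [Finset.sum_smul]
      _ = 0 := by
          refine Finset.sum_eq_zero fun l _ => ?_
          rw [hzero (l, p.2), zero_smul]
  have := Fintype.linearIndependent_iff.mp hβ (fun i => f (i, p.2)) hβj p.1
  simpa using this
end

section
/- Let n = g·h ≤ m with g, h positive integers, 1 ≤ s ≤ h, k ≥ 1, and let γ ∈ F_{q^m} be such that 1, γ, ..., γ^{n−1} are linearly independent over F_q. Let f be a linearized polynomial over F_{q^m} of q-degree at most k−1, and let U ∈ F_{q^m}^{g×h} be the folded Gabidulin codeword of f, i.e., U_{i,j} = f(γ^{ih+j}) for 0 ≤ i ≤ g−1, 0 ≤ j ≤ h−1. Let Y ∈ F_{q^m}^{g×h} be such that the g rows of Y−U, regarded as vectors in the F_q-vector space F_{q^m}^h, span an F_q-subspace of dimension at most t (i.e., the error Y−U has F_q-rank at most t), with t ≤ g. Let Q_0, Q_1, ..., Q_s be linearized polynomials over F_{q^m} satisfying Q_0(γ^{ih+j}) + ∑_{l=1}^{s} Q_l(Y_{i,j+l−1}) = 0 for all 0 ≤ i ≤ g−1 and 0 ≤ j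 ≤ h−s. Then the linearized polynomial E(X) = Q_0(X) + ∑_{l=1}^{s} Q_l(f(γ^{l−1}X)) has at least (g−t)(h−s+1) roots in F_{q^m} that are linearly independent over F_q. -/
/-!
Evaluating a `q`-linearized polynomial is `F_q`-linear, since each monomial `x ^ q ^ i` is an
iterate of the Frobenius of `F` over `F_q`; hence so is evaluating `E`. The interpolation
conditions turn `E(γ^{ih+j})` into `-∑_l Q_l(e_{i,j+l})`, where `e = Y - U` is the error. The `g`
error rows span a space of dimension at most `t`, so they satisfy `g - t` independent
`F_q`-linear relations `λ`, and each relation kills every column: for each `λ` and each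
`j ≤ h - s`, `∑_i λ_i γ^{ih+j}` is a root of `E`. These roots are independent because the
`γ^{ih+j}` are.
-/

open Polynomial

section Linearized

variable {q : ℕ} {K F : Type*} [Field K] [Fintype K] [Field F] [Algebra K F]

theorem IsLinearized.exists_algHom_eq_pow (hK : Fintype.card K = q) {p : F[X]}
    (hp : IsLinearized q p) {n : ℕ} (hn : n ∈ p.support) :
    ∃ φ : F →ₐ[K] F, ∀ x, φ x = x ^ n := by
  obtain ⟨i, rfl⟩ := hp n (mem_support_iff.mp hn)
  refine ⟨FiniteField.frobeniusAlgHom K F ^ i, fun x => ?_⟩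
  rw [AlgHom.coe_pow, FiniteField.coe_frobeniusAlgHom, pow_iterate, hK]

def IsLinearized.evalₗ (hK : Fintype.card K = q) {p : F[X]} (hp : IsLinearized q p) :
    F →ₗ[K] F where
  toFun := p.eval
  map_add' x y := by
    simp only [eval_eq_sum, Polynomial.sum, ← Finset.sum_add_distrib, ← mul_add]
    refine Finset.sum_congr rfl fun n hn => ?_
    obtain ⟨φ, hφ⟩ := hp.exists_algHom_eq_pow hK hn
    rw [← hφ, ← hφ, ← hφ, map_add]
  map_smul' c x := by
    simp only [eval_eq_sum, Polynomial.sum, RingHom.id_apply, Finset.smul_sum]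
    refine Finset.sum_congr rfl fun n hn => ?_
    obtain ⟨φ, hφ⟩ := hp.exists_algHom_eq_pow hK hn
    rw [← hφ, ← hφ, map_smul, mul_smul_comm]

@[simp]
theorem IsLinearized.evalₗ_apply (hK : Fintype.card K = q) {p : F[X]} (hp : IsLinearized q p)
    (x : F) : hp.evalₗ hK x = p.eval x :=
  rfl

end Linearized

section LinearAlgebra

variable {K M : Type*} [Field K] [AddCommGroup M] [Module K M]

theorem exists_linearIndependent_sum_smul_eq_zero {ι : Type*} [Fintype ι] (v : ι → M) {d : ℕ}
    (hd : d + Module.finrank K (Submodule.span K (Set.range v)) ≤ Fintype.card ι) :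
    ∃ c : Fin d → ι → K, LinearIndependent K c ∧ ∀ r, ∑ i, c r i • v i = 0 := by
  set φ := Fintype.linearCombination K v
  have hker : d ≤ Module.finrank K (LinearMap.ker φ) := by
    have := LinearMap.finrank_range_add_finrank_ker φ
    rw [Fintype.range_linearCombination, Module.finrank_fintype_fun_eq_card] at this
    omega
  let b := Module.finBasis K (LinearMap.ker φ)
  refine ⟨fun r => b (Fin.castLE hker r), ?_, fun r => ?_⟩
  · exact ((b.linearIndependent.map' _ (LinearMap.ker φ).ker_subtype).comp _
      (Fin.castLE_injective hker))
  · rw [← Fintype.linearCombination_apply]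
    exact (b (Fin.castLE hker r)).2

theorem LinearIndependent.sum_smul_prod {ι J R : Type*} [Fintype ι] [Fintype J] [Fintype R]
    {w : ι × J → M} (hw : LinearIndependent K w) {c : R → ι → K} (hc : LinearIndependent K c) :
    LinearIndependent K fun rj : R × J => ∑ i, c rj.1 i • w (i, rj.2) := by
  rw [Fintype.linearIndependent_iff] at hw hc ⊢
  intro a ha ⟨r, j⟩
  have hcoeff : ∀ i j, ∑ r, a (r, j) * c r i = 0 := by
    refine fun i j => hw (fun ij => ∑ r, a (r, ij.2) * c r ij.1) ?_ (i, j)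
    rw [← ha]
    simp only [Fintype.sum_prod_type, Finset.sum_smul, Finset.smul_sum, smul_smul]
    refine (Finset.sum_congr rfl fun _ _ => Finset.sum_comm).trans ?_
    rw [Finset.sum_comm]
    exact Finset.sum_congr rfl fun _ _ => Finset.sum_comm
  exact hc (fun r => a (r, j)) (funext fun i => by simpa using hcoeff i j) r

theorem linearIndependent_pow_mul_add {R : Type*} [Semiring R] [Module K R] {g h : ℕ} {γ : R}
    (hγ : LinearIndependent K fun i : Fin (g * h) => γ ^ (i : ℕ)) :
    LinearIndependent K fun ij : Fin g × Fin h => γ ^ ((ij.1 : ℕ) * h + ij.2) := by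
  convert hγ.comp _ finProdFinEquiv.injective using 2 with ij
  simp only [Function.comp_apply, finProdFinEquiv_apply_val]
  ring_nf

end LinearAlgebra

section Decoding

variable {q s : ℕ} {K F : Type*} [Field K] [Fintype K] [Field F] [Algebra K F]

-- The paper's `E`, with the summation index shifted down by one.
noncomputable def decodingPoly (Q : Fin (s + 1) → F[X]) (f : F[X]) (γ : F) : F[X] :=
  Q 0 + ∑ l : Fin s, (Q l.succ).comp (f.comp (C (γ ^ (l : ℕ)) * X))

theorem eval_decodingPoly (Q : Fin (s + 1) → F[X]) (f : F[X]) (γ x : F) :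
    (decodingPoly Q f γ).eval x =
      (Q 0).eval x + ∑ l : Fin s, (Q l.succ).eval (f.eval (γ ^ (l : ℕ) * x)) := by
  simp [decodingPoly, eval_finsetSum]

theorem eval_decodingPoly_sum_smul (hK : Fintype.card K = q) {Q : Fin (s + 1) → F[X]}
    (hQ : ∀ l, IsLinearized q (Q l)) {f : F[X]} (hf : IsLinearized q f) (γ : F) {ι : Type*}
    (S : Finset ι) (c : ι → K) (x : ι → F) :
    (decodingPoly Q f γ).eval (∑ i ∈ S, c i • x i) =
      ∑ i ∈ S, c i • (decodingPoly Q f γ).eval (x i) := by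
  let L : F →ₗ[K] F := (hQ 0).evalₗ hK +
    ∑ l : Fin s, (hQ l.succ).evalₗ hK ∘ₗ hf.evalₗ hK ∘ₗ LinearMap.mulLeft K (γ ^ (l : ℕ))
  have hL : ∀ y, L y = (decodingPoly Q f γ).eval y := by
    simp [L, eval_decodingPoly]
  simp only [← hL, map_sum, map_smul]

theorem eval_decodingPoly_eq_neg_sum (hK : Fintype.card K = q) {Q : Fin (s + 1) → F[X]}
    (hQ : ∀ l, IsLinearized q (Q l)) (f : F[X]) (γ : F) {x : F} {y : Fin s → F}
    (hxy : (Q 0).eval x + ∑ l : Fin s, (Q l.succ).eval (y l) = 0) :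
    (decodingPoly Q f γ).eval x =
      -∑ l : Fin s, (Q l.succ).eval (y l - f.eval (γ ^ (l : ℕ) * x)) := by
  have hsub : ∀ l : Fin s, (Q l.succ).eval (y l - f.eval (γ ^ (l : ℕ) * x)) =
      (Q l.succ).eval (y l) - (Q l.succ).eval (f.eval (γ ^ (l : ℕ) * x)) :=
    fun l => map_sub ((hQ l.succ).evalₗ hK) _ _
  rw [eval_decodingPoly, Finset.sum_congr rfl fun l _ => hsub l, Finset.sum_sub_distrib]
  linear_combination hxy

theorem eval_decodingPoly_sum_smul_eq_zero (hK : Fintype.card K = q) {Q : Fin (s + 1) → F[X]}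
    (hQ : ∀ l, IsLinearized q (Q l)) {f : F[X]} (hf : IsLinearized q f) (γ : F) {ι : Type*}
    [Fintype ι] {x : ι → F} {y : ι → Fin s → F}
    (hxy : ∀ i, (Q 0).eval (x i) + ∑ l : Fin s, (Q l.succ).eval (y i l) = 0) {c : ι → K}
    (hc : ∀ l : Fin s, ∑ i, c i • (y i l - f.eval (γ ^ (l : ℕ) * x i)) = 0) :
    (decodingPoly Q f γ).eval (∑ i, c i • x i) = 0 := by
  have hQₗ : ∀ l (z : F), (Q l).eval z = (hQ l).evalₗ hK z := fun _ _ => rfl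
  rw [eval_decodingPoly_sum_smul hK hQ hf]
  calc ∑ i, c i • (decodingPoly Q f γ).eval (x i)
      = ∑ i, c i • -∑ l : Fin s, (Q l.succ).eval (y i l - f.eval (γ ^ (l : ℕ) * x i)) :=
        Finset.sum_congr rfl fun i _ => by rw [eval_decodingPoly_eq_neg_sum hK hQ f γ (hxy i)]
    _ = -∑ l : Fin s, (Q l.succ).eval (∑ i, c i • (y i l - f.eval (γ ^ (l : ℕ) * x i))) := by
        simp only [hQₗ, map_sum, map_smul, smul_neg, Finset.smul_sum, Finset.sum_neg_distrib]
        rw [Finset.sum_comm]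
    _ = 0 := by simp only [hc, hQₗ, map_zero, Finset.sum_const_zero, neg_zero]

end Decoding

theorem stmt10_general (q n g h s t : ℕ) (hn : n = g * h) (hs : 1 ≤ s) (hsh : s ≤ h)
    {K F : Type*} [Field K] [Field F] [Algebra K F] [Fintype K]
    (hK : Fintype.card K = q)
    (γ : F) (hγ : LinearIndependent K fun i : Fin n => γ ^ (i : ℕ))
    (f : Polynomial F) (hflin : IsLinearized q f)
    (Y : ℕ → ℕ → F)
    (hrank : Module.finrank K
      ↥(Submodule.span K (Set.range fun i : Fin g =>
          fun j : Fin h => Y (i : ℕ) (j : ℕ) - f.eval (γ ^ ((i : ℕ) * h + (j : ℕ)))))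
      ≤ t)
    (Q : Fin (s + 1) → Polynomial F) (hQlin : ∀ l, IsLinearized q (Q l))
    (hinterp : ∀ i < g, ∀ j, j + s ≤ h →
      (Q 0).eval (γ ^ (i * h + j)) + ∑ l : Fin s, (Q l.succ).eval (Y i (j + (l : ℕ))) = 0) :
    ∃ β : Fin ((g - t) * (h - s + 1)) → F, LinearIndependent K β ∧
      ∀ i, (Q 0 + ∑ l : Fin s, (Q l.succ).comp (f.comp (C (γ ^ (l : ℕ)) * X))).eval (β i) = 0 := by
  subst hn
  set e : Fin g → Fin h → F := fun i j => Y i j - f.eval (γ ^ ((i : ℕ) * h + (j : ℕ)))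
  have hrank_le : Module.finrank K (Submodule.span K (Set.range e)) ≤ g :=
    (finrank_range_le_card e).trans_eq (Fintype.card_fin g)
  have hd : g - t + Module.finrank K (Submodule.span K (Set.range e)) ≤ Fintype.card (Fin g) := by
    rw [Fintype.card_fin]; omega
  obtain ⟨c, hc, hc_rel⟩ := exists_linearIndependent_sum_smul_eq_zero e hd
  have hpoints : LinearIndependent K fun ij : Fin g × Fin (h - s + 1) =>
      γ ^ ((ij.1 : ℕ) * h + ij.2) :=
    (linearIndependent_pow_mul_add hγ).comp (Prod.map id (Fin.castLE (by omega)))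
      (Function.injective_id.prodMap (Fin.castLE_injective _))
  suffices hroot : ∀ rj : Fin (g - t) × Fin (h - s + 1),
      (decodingPoly Q f γ).eval (∑ i, c rj.1 i • γ ^ ((i : ℕ) * h + rj.2)) = 0 from
    ⟨_, (hpoints.sum_smul_prod hc).comp _ finProdFinEquiv.symm.injective, fun _ => hroot _⟩
  rintro ⟨r, j⟩
  refine eval_decodingPoly_sum_smul_eq_zero hK hQlin hflin γ
    (x := fun i : Fin g => γ ^ ((i : ℕ) * h + j)) (y := fun i l => Y i (j + l))
    (fun i => hinterp i i.2 j (by omega)) fun l => ?_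
  have hpow : ∀ i : Fin g, γ ^ (l : ℕ) * γ ^ ((i : ℕ) * h + j) = γ ^ ((i : ℕ) * h + (j + l)) :=
    fun i => by rw [← pow_add]; ring_nf
  simpa only [hpow, e, Finset.sum_apply, Pi.smul_apply, Pi.zero_apply]
    using congrFun (hc_rel r) ⟨j + l, by omega⟩

/-- The folded-Gabidulin codeword of `f` is `U_{i,j} = f(γ^{ih+j})`. If the error `Y - U`
has `F_q`-rank at most `t ≤ g` and the linearized polynomials `Q_0, …, Q_s` satisfy the
interpolation conditions `Q_0(γ^{ih+j}) + ∑_{l=1}^s Q_l(Y_{i,j+l-1}) = 0` for all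
`0 ≤ i ≤ g-1`, `0 ≤ j ≤ h-s`, then `E(X) = Q_0(X) + ∑_{l=1}^s Q_l(f(γ^{l-1} X))` has at
least `(g-t)(h-s+1)` roots in `F_{q^m}` that are linearly independent over `F_q`. -/
theorem stmt10 (q m n g h s k t : ℕ) (hq : IsPrimePow q)
    (hg : 1 ≤ g) (hh : 1 ≤ h) (hn : n = g * h) (hnm : n ≤ m)
    (hs : 1 ≤ s) (hsh : s ≤ h) (hk : 1 ≤ k) (htg : t ≤ g)
    {K F : Type*} [Field K] [Field F] [Algebra K F] [Fintype K] [Fintype F]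
    (hK : Fintype.card K = q) (hF : Fintype.card F = q ^ m)
    (γ : F) (hγ : LinearIndependent K fun i : Fin n => γ ^ (i : ℕ))
    (f : Polynomial F) (hflin : IsLinearized q f)
    (hfdeg : ∀ i, f.coeff i ≠ 0 → ∃ j ≤ k - 1, i = q ^ j)
    (Y : ℕ → ℕ → F)
    (hrank : Module.finrank K
      ↥(Submodule.span K (Set.range fun i : Fin g =>
          fun j : Fin h => Y (i : ℕ) (j : ℕ) - f.eval (γ ^ ((i : ℕ) * h + (j : ℕ)))))
      ≤ t)
    (Q : Fin (s + 1) → Polynomial F) (hQlin : ∀ l, IsLinearized q (Q l))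
    (hinterp : ∀ i < g, ∀ j, j + s ≤ h →
      (Q 0).eval (γ ^ (i * h + j)) + ∑ l : Fin s, (Q l.succ).eval (Y i (j + (l : ℕ))) = 0) :
    ∃ β : Fin ((g - t) * (h - s + 1)) → F, LinearIndependent K β ∧
      ∀ i, (Q 0 + ∑ l : Fin s, (Q l.succ).comp (f.comp (C (γ ^ (l : ℕ)) * X))).eval (β i) = 0 :=
  stmt10_general q n g h s t hn hs hsh hK γ hγ f hflin Y hrank Q hQlin hinterp
end

section
/- For every real ε with 0 < ε < 1 there exist positive integers s and h with s ≤ h such that for every real R with 0 < R < 1, (s/(s+1))·(1 − h·R/(h−s+1)) > 1 − R − ε. In other words, the normalized decoding radius (s/(s+1))·(1 − h·R/(h−s+1)) of the folded Gabidulin list-decoder can be made to exceed 1 − R − ε for all rates R simultaneously by a suitable choice of the folding parameter h and the interpolation parameter s. -/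
/-!
Take `h = s²`. Since `(s + 1)(s² - s + 1) = s³ + 1`, the radius equals
`s/(s+1) - R·s³/(s³+1)`, which exceeds `s/(s+1) - R = 1 - R - 1/(s+1)`.
So it suffices to take `s` with `1/(s+1) < ε`.
-/

lemma folded_radius_sq_eq (s R : ℝ) (hs : 0 ≤ s) :
    s / (s + 1) * (1 - s ^ 2 * R / (s ^ 2 - s + 1)) = s / (s + 1) - s ^ 3 / (s ^ 3 + 1) * R := by
  have hq : s ^ 2 - s + 1 ≠ 0 := by nlinarith [sq_nonneg (s - 1)]
  have hs1 : s + 1 ≠ 0 := by positivity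
  rw [show s ^ 3 + 1 = (s + 1) * (s ^ 2 - s + 1) by ring]
  field_simp

lemma one_sub_sub_inv_lt_folded_radius_sq (s R : ℝ) (hs : 0 ≤ s) (hR : 0 < R) :
    1 - R - 1 / (s + 1) < s / (s + 1) * (1 - s ^ 2 * R / (s ^ 2 - s + 1)) := by
  have hfrac : s ^ 3 / (s ^ 3 + 1) < 1 := (div_lt_one (by positivity)).2 (lt_add_one _)
  have hs1 : s / (s + 1) = 1 - 1 / (s + 1) := by field_simp; ring
  rw [folded_radius_sq_eq s R hs, hs1]
  nlinarith

/-- For every `0 < ε < 1` there are positive integers `s ≤ h` such that for every rate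
`0 < R < 1` the normalized decoding radius `(s/(s+1))·(1 - hR/(h-s+1))` of the folded
Gabidulin list-decoder exceeds `1 - R - ε`. -/
theorem stmt13 :
    ∀ ε : ℝ, 0 < ε → ε < 1 →
      ∃ s h : ℕ, 0 < s ∧ s ≤ h ∧
        ∀ R : ℝ, 0 < R → R < 1 →
          ((s : ℝ) / ((s : ℝ) + 1)) * (1 - (h : ℝ) * R / ((h : ℝ) - (s : ℝ) + 1))
            > 1 - R - ε := by
  intro ε hε _
  obtain ⟨n, hn⟩ := exists_nat_one_div_lt hε
  refine ⟨n + 1, (n + 1) ^ 2, n.succ_pos, Nat.le_self_pow two_ne_zero _, fun R hR _ => ?_⟩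
  have hs : (0 : ℝ) ≤ n + 1 := by positivity
  have hinv : 1 / ((n + 1 : ℝ) + 1) ≤ 1 / (n + 1) :=
    one_div_le_one_div_of_le (by positivity) (by linarith)
  push_cast
  linarith [one_sub_sub_inv_lt_folded_radius_sq (n + 1) R hs hR]
end
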